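/- Let A be an n×m complex matrix, ρ its largest entry absolute value, and 1 < p ≤ q < ∞. Suppose (i) every entry of A of absolute value ρ is the only nonzero entry of its row and of its column, and (ii) the matrix C obtained from A by replacing all entries of absolute value ρ by 0 satisfies ‖C‖_{p,q} ≤ ρ. Then ‖A‖_{r,s} = m^{1-1/r} n^{1/s} ‖A‖_{p,q} · m^{-(1-1/p)} n^{-1/q} holds with equality in the bound ‖A‖_{r,s} ≤ m^{(1/p)-(1/r)} n^{(1/s)-(1/q)} ‖A‖_{p,q} for all r < p and s > q; in particular ‖A‖_{p,q} = ρ. -/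

import Mathlib

open scoped BigOperators ENNReal

/-- The Hölder `ℓ_p` norm of a vector in `ℂ^m`, for `p ∈ [1,∞]`. -/
noncomputable def lpNorm {m : ℕ} (p : ℝ≥0∞) (x : Fin m → ℂ) : ℝ :=
  if p = ⊤ then ⨆ i, ‖x i‖ else (∑ i, ‖x i‖ ^ p.toReal) ^ (1 / p.toReal)

/-- The operator norm of an `n × m` complex matrix induced by `ℓ_p` on `ℂ^m`
and `ℓ_q` on `ℂ^n`. -/
noncomputable def opNorm {n m : ℕ} (p q : ℝ≥0∞) (A : Matrix (Fin n) (Fin m) ℂ) : ℝ :=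
  ⨆ x : {x : Fin m → ℂ // x ≠ 0}, lpNorm q (A.mulVec x.1) / lpNorm p x.1

/-- The operator norm of an `n × m` complex matrix induced by general norms
`μ` on `ℂ^m` and `ν` on `ℂ^n`. -/
noncomputable def opNormGen {n m : ℕ} (μ : (Fin m → ℂ) → ℝ) (ν : (Fin n → ℂ) → ℝ)
    (A : Matrix (Fin n) (Fin m) ℂ) : ℝ :=
  ⨆ x : {x : Fin m → ℂ // x ≠ 0}, ν (A.mulVec x.1) / μ x.1

/-!
The entries of modulus `ρ` form a scaled partial permutation matrix `D`, and `A = D + C` where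
`D` and `C` live on disjoint sets of rows and of columns. For `p ≤ q` one has
`‖·‖_q ≤ ‖·‖_p`, so `‖D‖_{p,q} ≤ ‖D‖_{q,q} ≤ ρ`, while `‖C‖_{p,q} ≤ ρ` by hypothesis.
Splitting `x = x₁ + x₂` along the column blocks,
`‖A x‖_q^q = ‖D x₁‖_q^q + ‖C x₂‖_q^q ≤ ρ^q (‖x₁‖_p^q + ‖x₂‖_p^q) ≤ ρ^q ‖x‖_p^q`,
the last step again because `p ≤ q`. Hence `‖A‖_{r,s} ≤ ρ` whenever `r ≤ p` and `q ≤ s`,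
and a standard basis vector hitting an entry of modulus `ρ` gives `‖A‖_{r,s} ≥ ρ`.
So all these norms equal `ρ`, and the exponents in the bound vanish.
-/

open Finset Function Matrix

theorem sum_rpow_le_rpow_sum {ι : Type*} (s : Finset ι) {f : ι → ℝ} (hf : ∀ i ∈ s, 0 ≤ f i)
    {k : ℝ} (hk : 1 ≤ k) : ∑ i ∈ s, f i ^ k ≤ (∑ i ∈ s, f i) ^ k := by
  classical
  induction s using Finset.induction_on with
  | empty => simp [Real.zero_rpow (by linarith : k ≠ 0)]
  | insert a s ha ih =>
    rw [sum_insert ha, sum_insert ha]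
    have hfs : ∀ i ∈ s, 0 ≤ f i := fun i hi => hf i (mem_insert_of_mem hi)
    calc f a ^ k + ∑ i ∈ s, f i ^ k ≤ f a ^ k + (∑ i ∈ s, f i) ^ k := by gcongr; exact ih hfs
      _ ≤ (f a + ∑ i ∈ s, f i) ^ k :=
        Real.add_rpow_le_rpow_add (hf a (mem_insert_self a s)) (sum_nonneg hfs) hk

theorem map_sum_of_support_subsingleton {ι M N : Type*} [Fintype ι] [AddCommMonoid M]
    [AddCommMonoid N] {f : ι → M} (hf : (support f).Subsingleton) (φ : M → N) (hφ : φ 0 = 0) :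
    φ (∑ i, f i) = ∑ i, φ (f i) := by
  rcases hf.eq_empty_or_singleton with h | ⟨a, ha⟩
  · simp [support_eq_empty_iff.mp h, hφ]
  · have hzero : ∀ i, i ≠ a → f i = 0 := fun i hi => by
      simpa [← notMem_support, ha] using hi
    rw [Fintype.sum_eq_single a hzero, Fintype.sum_eq_single a fun i hi => by rw [hzero i hi, hφ]]

theorem sum_le_of_support_subsingleton {ι : Type*} [Fintype ι] {f : ι → ℝ}
    (hf : (support f).Subsingleton) {c : ℝ} (hc : 0 ≤ c) (h : ∀ i, f i ≤ c) : ∑ i, f i ≤ c := by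
  rcases hf.eq_empty_or_singleton with hs | ⟨a, ha⟩
  · simpa [support_eq_empty_iff.mp hs] using hc
  · rw [Fintype.sum_eq_single a fun i hi => by simpa [← notMem_support, ha] using hi]
    exact h a

theorem ENNReal.toReal_one_div_le_of_le {a b : ℝ≥0∞} (hab : a ≤ b) (ha : a ≠ 0) :
    (1 / b).toReal ≤ (1 / a).toReal :=
  ENNReal.toReal_mono (by simpa using ha) (ENNReal.div_le_div_left hab 1)

section lpNorm

variable {m : ℕ} {p q : ℝ≥0∞}

theorem lpNorm_nonneg (p : ℝ≥0∞) (x : Fin m → ℂ) : 0 ≤ lpNorm p x := by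
  unfold lpNorm
  split
  · exact Real.iSup_nonneg fun i => norm_nonneg _
  · positivity

theorem lpNorm_rpow_toReal (hp0 : p ≠ 0) (hp : p ≠ ⊤) (x : Fin m → ℂ) :
    lpNorm p x ^ p.toReal = ∑ i, ‖x i‖ ^ p.toReal := by
  rw [lpNorm, if_neg hp, one_div,
    Real.rpow_inv_rpow (sum_nonneg fun i _ => by positivity) (ENNReal.toReal_pos hp0 hp).ne']

theorem norm_le_lpNorm (hp0 : p ≠ 0) (x : Fin m → ℂ) (j : Fin m) : ‖x j‖ ≤ lpNorm p x := by
  by_cases hp : p = ⊤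
  · rw [lpNorm, if_pos hp]
    exact le_ciSup (Set.finite_range fun i => ‖x i‖).bddAbove j
  · have ht := ENNReal.toReal_pos hp0 hp
    calc ‖x j‖ = (‖x j‖ ^ p.toReal) ^ (1 / p.toReal) := by
          rw [one_div, Real.rpow_rpow_inv (norm_nonneg _) ht.ne']
      _ ≤ (∑ i, ‖x i‖ ^ p.toReal) ^ (1 / p.toReal) := by
          gcongr
          exact single_le_sum (f := fun i => ‖x i‖ ^ p.toReal) (fun i _ => by positivity)
            (mem_univ j)
      _ = lpNorm p x := (if_neg hp).symm

theorem lpNorm_pos (hp0 : p ≠ 0) {x : Fin m → ℂ} (hx : x ≠ 0) : 0 < lpNorm p x := by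
  obtain ⟨j, hj⟩ := ne_iff.mp hx
  exact (norm_pos_iff.mpr hj).trans_le (norm_le_lpNorm hp0 x j)

theorem lpNorm_zero (hp0 : p ≠ 0) : lpNorm p (0 : Fin m → ℂ) = 0 := by
  by_cases hp : p = ⊤
  · simp [lpNorm, hp]
  · have ht := ENNReal.toReal_pos hp0 hp
    simp [lpNorm, hp, Real.zero_rpow ht.ne', Real.zero_rpow (inv_ne_zero ht.ne')]

theorem lpNorm_antitone (hp0 : p ≠ 0) (hpq : p ≤ q) (x : Fin m → ℂ) :
    lpNorm q x ≤ lpNorm p x := by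
  by_cases hq : q = ⊤
  · rw [lpNorm, if_pos hq]
    exact Real.iSup_le (norm_le_lpNorm hp0 x) (lpNorm_nonneg p x)
  have hp : p ≠ ⊤ := ne_top_of_le_ne_top hq hpq
  have ht := ENNReal.toReal_pos hp0 hp
  have htu : p.toReal ≤ q.toReal := ENNReal.toReal_mono hq hpq
  have hu : 0 < q.toReal := ht.trans_le htu
  have hq0 : q ≠ 0 := ((pos_iff_ne_zero.mpr hp0).trans_le hpq).ne'
  have hrpow : ∀ a : ℝ, 0 ≤ a → a ^ q.toReal = (a ^ p.toReal) ^ (q.toReal / p.toReal) :=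
    fun a ha => by rw [← Real.rpow_mul ha, mul_div_cancel₀ _ ht.ne']
  rw [← Real.rpow_le_rpow_iff (lpNorm_nonneg q x) (lpNorm_nonneg p x) hu,
    lpNorm_rpow_toReal hq0 hq, hrpow _ (lpNorm_nonneg p x), lpNorm_rpow_toReal hp0 hp]
  simp_rw [hrpow _ (norm_nonneg _)]
  exact sum_rpow_le_rpow_sum _ (fun i _ => by positivity) ((one_le_div ht).mpr htu)

theorem lpNorm_add_of_disjoint (hp0 : p ≠ 0) (hp : p ≠ ⊤) {x y : Fin m → ℂ}
    (hxy : ∀ i, x i = 0 ∨ y i = 0) :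
    lpNorm p (x + y) = (lpNorm p x ^ p.toReal + lpNorm p y ^ p.toReal) ^ (1 / p.toReal) := by
  have ht := ENNReal.toReal_pos hp0 hp
  have hsum : ∀ i, ‖x i + y i‖ ^ p.toReal = ‖x i‖ ^ p.toReal + ‖y i‖ ^ p.toReal := fun i => by
    rcases hxy i with h | h <;> simp [h, Real.zero_rpow ht.ne']
  rw [lpNorm_rpow_toReal hp0 hp, lpNorm_rpow_toReal hp0 hp, ← sum_add_distrib, lpNorm, if_neg hp]
  simp_rw [Pi.add_apply, hsum]

theorem lpNorm_single_one (hp0 : p ≠ 0) (hp : p ≠ ⊤) (j : Fin m) :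
    lpNorm p (Pi.single j 1 : Fin m → ℂ) = 1 := by
  have ht := ENNReal.toReal_pos hp0 hp
  rw [lpNorm, if_neg hp,
    Fintype.sum_eq_single j fun i hi => by simp [hi, Real.zero_rpow ht.ne']]
  simp

theorem lpNorm_one (y : Fin m → ℂ) : lpNorm 1 y = ∑ i, ‖y i‖ := by
  simp [lpNorm]

end lpNorm

section opNorm

variable {n m : ℕ} {p q : ℝ≥0∞}

theorem lpNorm_mulVec_le_sum_norm_mul (hp0 : p ≠ 0) (hq : 1 ≤ q)
    (A : Matrix (Fin n) (Fin m) ℂ) (x : Fin m → ℂ) :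
    lpNorm q (A *ᵥ x) ≤ (∑ i, ∑ j, ‖A i j‖) * lpNorm p x := by
  calc lpNorm q (A *ᵥ x) ≤ ∑ i, ‖(A *ᵥ x) i‖ := by
        simpa [lpNorm_one] using lpNorm_antitone one_ne_zero hq (A *ᵥ x)
    _ ≤ ∑ i, ∑ j, ‖A i j‖ * lpNorm p x := by
        gcongr with i
        refine (norm_sum_le univ fun j => A i j * x j).trans (sum_le_sum fun j _ => ?_)
        rw [norm_mul]
        gcongr
        exact norm_le_lpNorm hp0 x j
    _ = (∑ i, ∑ j, ‖A i j‖) * lpNorm p x := by simp_rw [sum_mul]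

theorem div_le_opNorm (hp0 : p ≠ 0) (hq : 1 ≤ q) (A : Matrix (Fin n) (Fin m) ℂ)
    {x : Fin m → ℂ} (hx : x ≠ 0) : lpNorm q (A *ᵥ x) / lpNorm p x ≤ opNorm p q A := by
  refine le_ciSup (f := fun x : {x : Fin m → ℂ // x ≠ 0} => lpNorm q (A *ᵥ x.1) / lpNorm p x.1)
    ⟨∑ i, ∑ j, ‖A i j‖, ?_⟩ ⟨x, hx⟩
  rintro _ ⟨y, rfl⟩
  exact div_le_of_le_mul₀ (lpNorm_nonneg p _) (by positivity)
    (lpNorm_mulVec_le_sum_norm_mul hp0 hq A y.1)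

theorem opNorm_le_of_forall (hp0 : p ≠ 0) (A : Matrix (Fin n) (Fin m) ℂ) {K : ℝ} (hK : 0 ≤ K)
    (h : ∀ x, lpNorm q (A *ᵥ x) ≤ K * lpNorm p x) : opNorm p q A ≤ K :=
  Real.iSup_le (fun x => (div_le_iff₀ (lpNorm_pos hp0 x.2)).mpr (h x.1)) hK

theorem lpNorm_mulVec_le_of_opNorm_le (hp0 : p ≠ 0) (hq : 1 ≤ q)
    {A : Matrix (Fin n) (Fin m) ℂ} {K : ℝ} (hK : 0 ≤ K) (hA : opNorm p q A ≤ K)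
    (x : Fin m → ℂ) : lpNorm q (A *ᵥ x) ≤ K * lpNorm p x := by
  rcases eq_or_ne x 0 with rfl | hx
  · rw [mulVec_zero, lpNorm_zero (zero_lt_one.trans_le hq).ne']
    exact mul_nonneg hK (lpNorm_nonneg p 0)
  · exact (div_le_iff₀ (lpNorm_pos hp0 hx)).mp ((div_le_opNorm hp0 hq A hx).trans hA)

theorem norm_le_opNorm (hp0 : p ≠ 0) (hp : p ≠ ⊤) (hq : 1 ≤ q) (A : Matrix (Fin n) (Fin m) ℂ)
    (i : Fin n) (j : Fin m) : ‖A i j‖ ≤ opNorm p q A := by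
  have h := div_le_opNorm hp0 hq A (Pi.single_ne_zero_iff.mpr one_ne_zero : Pi.single j 1 ≠ 0)
  rw [lpNorm_single_one hp0 hp, div_one, mulVec_single_one] at h
  exact (norm_le_lpNorm (zero_lt_one.trans_le hq).ne' _ i).trans h

end opNorm

section blocks

variable {n m : ℕ} {p q : ℝ≥0∞}

theorem lpNorm_mulVec_le_of_support_subsingleton (hq0 : q ≠ 0) (hq : q ≠ ⊤)
    {D : Matrix (Fin n) (Fin m) ℂ} {ρ : ℝ} (hρ : 0 ≤ ρ) (hD : ∀ i j, ‖D i j‖ ≤ ρ)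
    (hrow : ∀ i, (support (D i)).Subsingleton) (hcol : ∀ j, (support (D.col j)).Subsingleton)
    (y : Fin m → ℂ) : lpNorm q (D *ᵥ y) ≤ ρ * lpNorm q y := by
  set u := q.toReal
  have hu : 0 < u := ENNReal.toReal_pos hq0 hq
  have hφ : (fun z : ℂ => ‖z‖ ^ u) 0 = 0 := by simp [Real.zero_rpow hu.ne']
  rw [← Real.rpow_le_rpow_iff (lpNorm_nonneg q _) (mul_nonneg hρ (lpNorm_nonneg q y)) hu,
    Real.mul_rpow hρ (lpNorm_nonneg q y), lpNorm_rpow_toReal hq0 hq, lpNorm_rpow_toReal hq0 hq]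
  calc ∑ i, ‖(D *ᵥ y) i‖ ^ u = ∑ i, ∑ j, ‖D i j‖ ^ u * ‖y j‖ ^ u := by
        refine sum_congr rfl fun i _ => ?_
        have hsupp := (hrow i).anti (support_mul_subset_left (D i) y)
        refine (map_sum_of_support_subsingleton hsupp (fun z : ℂ => ‖z‖ ^ u) hφ).trans ?_
        simp_rw [norm_mul, Real.mul_rpow (norm_nonneg _) (norm_nonneg _)]
    _ = ∑ j, (∑ i, ‖D i j‖ ^ u) * ‖y j‖ ^ u := by
        rw [sum_comm]
        simp_rw [sum_mul]
    _ ≤ ∑ j, ρ ^ u * ‖y j‖ ^ u := by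
        gcongr with j
        exact sum_le_of_support_subsingleton
          ((hcol j).anti (support_comp_subset (g := fun z : ℂ => ‖z‖ ^ u) hφ (D.col j)))
          (by positivity) fun i => Real.rpow_le_rpow (norm_nonneg _) (hD i j) hu.le
    _ = ρ ^ u * ∑ j, ‖y j‖ ^ u := (mul_sum _ _ _).symm

theorem mulVec_indicator_eq (M : Matrix (Fin n) (Fin m) ℂ) {S : Set (Fin m)}
    (hM : ∀ j ∉ S, M.col j = 0) (x : Fin m → ℂ) : M *ᵥ S.indicator x = M *ᵥ x := by
  ext i
  simp only [mulVec, dotProduct]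
  refine sum_congr rfl fun j _ => ?_
  by_cases hj : j ∈ S
  · simp [hj]
  · have hMij : M i j = 0 := by simpa using congrFun (hM j hj) i
    simp [hj, hMij]

theorem lpNorm_add_mulVec_le_of_disjoint_blocks (hp0 : p ≠ 0) (hpq : p ≤ q) (hq : q ≠ ⊤)
    {D C : Matrix (Fin n) (Fin m) ℂ} (hrow : ∀ i, D i = 0 ∨ C i = 0)
    (hcol : ∀ j, D.col j = 0 ∨ C.col j = 0) {ρ : ℝ} (hρ : 0 ≤ ρ)
    (hD : ∀ x, lpNorm q (D *ᵥ x) ≤ ρ * lpNorm p x) (hC : ∀ x, lpNorm q (C *ᵥ x) ≤ ρ * lpNorm p x)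
    (x : Fin m → ℂ) : lpNorm q ((D + C) *ᵥ x) ≤ ρ * lpNorm p x := by
  have hp : p ≠ ⊤ := ne_top_of_le_ne_top hq hpq
  have hq0 : q ≠ 0 := ((pos_iff_ne_zero.mpr hp0).trans_le hpq).ne'
  have ht := ENNReal.toReal_pos hp0 hp
  have htu : p.toReal ≤ q.toReal := ENNReal.toReal_mono hq hpq
  set S : Set (Fin m) := {j | C.col j = 0}
  have hDx : D *ᵥ x = D *ᵥ S.indicator x :=
    (mulVec_indicator_eq D (fun j hj => (hcol j).resolve_right hj) x).symm
  have hCx : C *ᵥ x = C *ᵥ Sᶜ.indicator x :=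
    (mulVec_indicator_eq C (fun j hj => not_not.mp hj) x).symm
  have hrows : ∀ i, (D *ᵥ x) i = 0 ∨ (C *ᵥ x) i = 0 := fun i => by
    rcases hrow i with h | h <;> simp [mulVec, h]
  have hcols : ∀ j, S.indicator x j = 0 ∨ Sᶜ.indicator x j = 0 := fun j => by
    by_cases hj : j ∈ S <;> simp [hj]
  have ha := lpNorm_nonneg p (S.indicator x)
  have hb := lpNorm_nonneg p (Sᶜ.indicator x)
  have hDS := lpNorm_nonneg q (D *ᵥ S.indicator x)
  have hCS := lpNorm_nonneg q (C *ᵥ Sᶜ.indicator x)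
  calc lpNorm q ((D + C) *ᵥ x)
      = (lpNorm q (D *ᵥ S.indicator x) ^ q.toReal
          + lpNorm q (C *ᵥ Sᶜ.indicator x) ^ q.toReal) ^ (1 / q.toReal) := by
        rw [add_mulVec, lpNorm_add_of_disjoint hq0 hq hrows, hDx, hCx]
    _ ≤ ((ρ * lpNorm p (S.indicator x)) ^ q.toReal
          + (ρ * lpNorm p (Sᶜ.indicator x)) ^ q.toReal) ^ (1 / q.toReal) := by
        gcongr
        exacts [hD _, hC _]
    _ ≤ ((ρ * lpNorm p (S.indicator x)) ^ p.toReal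
          + (ρ * lpNorm p (Sᶜ.indicator x)) ^ p.toReal) ^ (1 / p.toReal) :=
        Real.rpow_add_rpow_le (by positivity) (by positivity) ht htu
    _ = ρ * (lpNorm p (S.indicator x) ^ p.toReal
          + lpNorm p (Sᶜ.indicator x) ^ p.toReal) ^ (1 / p.toReal) := by
        rw [Real.mul_rpow hρ ha, Real.mul_rpow hρ hb, ← mul_add,
          Real.mul_rpow (by positivity) (by positivity), ← Real.rpow_mul hρ,
          mul_one_div_cancel ht.ne', Real.rpow_one]
    _ = ρ * lpNorm p x := by
        rw [← lpNorm_add_of_disjoint hp0 hp hcols, Set.indicator_self_add_compl]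

end blocks

section peaks

variable {n m : ℕ} {p q : ℝ≥0∞}

noncomputable def peakPart (A : Matrix (Fin n) (Fin m) ℂ) (ρ : ℝ) : Matrix (Fin n) (Fin m) ℂ :=
  Matrix.of fun i j => if ‖A i j‖ = ρ then A i j else 0

noncomputable def offPeakPart (A : Matrix (Fin n) (Fin m) ℂ) (ρ : ℝ) : Matrix (Fin n) (Fin m) ℂ :=
  Matrix.of fun i j => if ‖A i j‖ = ρ then 0 else A i j

def PeaksIsolated (A : Matrix (Fin n) (Fin m) ℂ) (ρ : ℝ) : Prop :=
  ∀ i j, ‖A i j‖ = ρ → (∀ j', j' ≠ j → A i j' = 0) ∧ (∀ i', i' ≠ i → A i' j = 0)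

variable {A : Matrix (Fin n) (Fin m) ℂ} {ρ : ℝ}

theorem peakPart_add_offPeakPart (A : Matrix (Fin n) (Fin m) ℂ) (ρ : ℝ) :
    peakPart A ρ + offPeakPart A ρ = A := by
  ext i j
  by_cases h : ‖A i j‖ = ρ <;> simp [peakPart, offPeakPart, h]

theorem norm_peakPart_le (i : Fin n) (j : Fin m) : ‖peakPart A ρ i j‖ ≤ ‖A i j‖ := by
  by_cases h : ‖A i j‖ = ρ <;> simp [peakPart, h]

theorem eq_of_peakPart_ne_zero {i : Fin n} {j : Fin m} (h : peakPart A ρ i j ≠ 0) :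
    ‖A i j‖ = ρ := by
  by_contra hne
  simp [peakPart, hne] at h

namespace PeaksIsolated

theorem offPeakPart_row (hA : PeaksIsolated A ρ) {i : Fin n} {j : Fin m} (hij : ‖A i j‖ = ρ) :
    offPeakPart A ρ i = 0 := by
  ext j'
  by_cases hj : j' = j
  · simp [offPeakPart, hj, hij]
  · simp [offPeakPart, (hA i j hij).1 j' hj]

theorem offPeakPart_col (hA : PeaksIsolated A ρ) {i : Fin n} {j : Fin m} (hij : ‖A i j‖ = ρ) :
    (offPeakPart A ρ).col j = 0 := by
  ext i'
  by_cases hi : i' = i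
  · simp [offPeakPart, hi, hij]
  · simp [offPeakPart, (hA i j hij).2 i' hi]

theorem row_eq_zero_or (hA : PeaksIsolated A ρ) (i : Fin n) :
    peakPart A ρ i = 0 ∨ offPeakPart A ρ i = 0 := by
  by_cases hpeak : ∃ j, ‖A i j‖ = ρ
  · obtain ⟨j, hj⟩ := hpeak
    exact Or.inr (hA.offPeakPart_row hj)
  · left
    ext j
    simp [peakPart, not_exists.mp hpeak j]

theorem col_eq_zero_or (hA : PeaksIsolated A ρ) (j : Fin m) :
    (peakPart A ρ).col j = 0 ∨ (offPeakPart A ρ).col j = 0 := by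
  by_cases hpeak : ∃ i, ‖A i j‖ = ρ
  · obtain ⟨i, hi⟩ := hpeak
    exact Or.inr (hA.offPeakPart_col hi)
  · left
    ext i
    simp [peakPart, not_exists.mp hpeak i]

theorem support_peakPart_row (hA : PeaksIsolated A ρ) (i : Fin n) :
    (support (peakPart A ρ i)).Subsingleton := by
  intro j hj j' hj'
  by_contra hne
  exact hj' (by simp [peakPart, (hA i j (eq_of_peakPart_ne_zero hj)).1 j' (Ne.symm hne)])

theorem support_peakPart_col (hA : PeaksIsolated A ρ) (j : Fin m) :
    (support ((peakPart A ρ).col j)).Subsingleton := by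
  intro i hi i' hi'
  by_contra hne
  exact hi' (by simp [peakPart, (hA i j (eq_of_peakPart_ne_zero hi)).2 i' (Ne.symm hne)])

theorem lpNorm_mulVec_le (hA : PeaksIsolated A ρ) (hp0 : p ≠ 0) (hpq : p ≤ q) (hq : q ≠ ⊤)
    (hρ : 0 ≤ ρ) (hle : ∀ i j, ‖A i j‖ ≤ ρ)
    (hoff : ∀ x, lpNorm q (offPeakPart A ρ *ᵥ x) ≤ ρ * lpNorm p x) (x : Fin m → ℂ) :
    lpNorm q (A *ᵥ x) ≤ ρ * lpNorm p x := by
  have hq0 : q ≠ 0 := ((pos_iff_ne_zero.mpr hp0).trans_le hpq).ne'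
  have hpeak (y : Fin m → ℂ) : lpNorm q (peakPart A ρ *ᵥ y) ≤ ρ * lpNorm p y :=
    (lpNorm_mulVec_le_of_support_subsingleton hq0 hq hρ
      (fun i j => (norm_peakPart_le i j).trans (hle i j)) hA.support_peakPart_row
      hA.support_peakPart_col y).trans (by gcongr; exact lpNorm_antitone hp0 hpq y)
  rw [← peakPart_add_offPeakPart A ρ]
  exact lpNorm_add_mulVec_le_of_disjoint_blocks hp0 hpq hq hA.row_eq_zero_or hA.col_eq_zero_or
    hρ hpeak hoff x

end PeaksIsolated

end peaks

/-- Theorem 3 (converse direction, `1 < p ≤ q < ∞`): if every entry of maximal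
absolute value `ρ` is the only nonzero entry of its row and column, and the
matrix `C` obtained by zeroing these entries satisfies `‖C‖_{p,q} ≤ ρ`, then
equality holds in the bound (1.5) for all `r < p` and `s > q`; in particular
`‖A‖_{p,q} = ρ`. -/
theorem stmt_13 {n m : ℕ} (A : Matrix (Fin n) (Fin m) ℂ) (p q : ℝ≥0∞)
    (hp : 1 < p) (hpq : p ≤ q) (hq : q ≠ ⊤) (ρ : ℝ)
    (hρ : IsGreatest {t : ℝ | ∃ i j, t = ‖A i j‖} ρ)
    (hi : ∀ i j, ‖A i j‖ = ρ →
      (∀ j', j' ≠ j → A i j' = 0) ∧ (∀ i', i' ≠ i → A i' j = 0))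
    (hC : opNorm p q (Matrix.of fun i j => if ‖A i j‖ = ρ then 0 else A i j) ≤ ρ) :
    (∀ r s : ℝ≥0∞, 1 ≤ r → r < p → q < s →
      opNorm r s A =
        (m : ℝ) ^ max ((1 / p).toReal - (1 / r).toReal) 0 *
          (n : ℝ) ^ max ((1 / s).toReal - (1 / q).toReal) 0 * opNorm p q A) ∧
    opNorm p q A = ρ := by
  obtain ⟨⟨i₀, j₀, hρ_eq⟩, hρ_max⟩ := hρ
  have hle : ∀ i j, ‖A i j‖ ≤ ρ := fun i j => hρ_max ⟨i, j, rfl⟩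
  have hρ0 : 0 ≤ ρ := hρ_eq ▸ norm_nonneg _
  have hp0 : p ≠ 0 := (zero_lt_one.trans hp).ne'
  have hp_top : p ≠ ⊤ := ne_top_of_le_ne_top hq hpq
  have hq1 : 1 ≤ q := hp.le.trans hpq
  have hq0 : q ≠ 0 := (zero_lt_one.trans_le hq1).ne'
  have hbound := PeaksIsolated.lpNorm_mulVec_le hi hp0 hpq hq hρ0 hle
    (lpNorm_mulVec_le_of_opNorm_le hp0 hq1 hρ0 hC)
  have hnorm : ∀ r s, r ≠ 0 → r ≤ p → q ≤ s → opNorm r s A = ρ := fun r s hr0 hrp hqs =>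
    le_antisymm
      (opNorm_le_of_forall hr0 A hρ0 fun x =>
        calc lpNorm s (A *ᵥ x) ≤ lpNorm q (A *ᵥ x) := lpNorm_antitone hq0 hqs _
          _ ≤ ρ * lpNorm p x := hbound x
          _ ≤ ρ * lpNorm r x := by gcongr; exact lpNorm_antitone hr0 hrp x)
      (hρ_eq ▸ norm_le_opNorm hr0 (ne_top_of_le_ne_top hp_top hrp) (hq1.trans hqs) A i₀ j₀)
  refine ⟨fun r s hr hrp hqs => ?_, hnorm p q hp0 le_rfl le_rfl⟩
  have hr0 : r ≠ 0 := (zero_lt_one.trans_le hr).ne'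
  rw [max_eq_right (sub_nonpos.mpr (ENNReal.toReal_one_div_le_of_le hrp.le hr0)),
    max_eq_right (sub_nonpos.mpr (ENNReal.toReal_one_div_le_of_le hqs.le hq0)),
    Real.rpow_zero, Real.rpow_zero, one_mul, one_mul, hnorm r s hr0 hrp.le hqs.le,
    hnorm p q hp0 le_rfl le_rfl]
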